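/- arXiv:2305.19588 — 8 statements merged into one kernel-verified Lean document; each statement's English description precedes it below -/
import Mathlib

section
/- There exist two DAGs G₁ and G₂ on the same finite vertex set that are Markov equivalent (same skeleton and same v-structures) and satisfy mvc(C(G₁)) = 2 · mvc(C(G₂)); concretely, on vertices {a,b,c,d} the DAGs G₁ with arcs b→a, c→a, c→b, c→d and G₂ with arcs b→a, c→a, b→c, c→d are Markov equivalent with mvc(C(G₁)) = 2 and mvc(C(G₂)) = 1. Hence the factor 2 in the bound mvc(C(G)) ≤ 2·mvc(C(G')) for Markov-equivalent DAGs is tight. -/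
/-!
In `G₁` the covered edges are `b → a`, `c → b`, `c → d`, a path `a - b - c - d`: its two
disjoint edges `b → a` and `c → d` force a vertex cover of size 2, and `{b, c}` is one.
`G₂` arises from `G₁` by reversing the covered edge `c → b`; its covered edges `c → a` and
`b → c` are both met by `c`. Both graphs have the same skeleton and no v-structures, so they
are Markov equivalent, and each is acyclic because a rank function strictly decreases along
its arcs.
-/

/-- A directed graph (given by its edge relation) is a DAG if it has no directed cycles. -/
def IsDAG {V : Type*} (E : V → V → Prop) : Prop :=
  ∀ v : V, ¬ Relation.TransGen E v v

/-- The set of parents of `v` in the directed graph `E`. -/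
def parents {V : Type*} (E : V → V → Prop) (v : V) : Set V := {u | E u v}

/-- An arc `x → y` of `E` is a covered edge if `Pa(x) = Pa(y) \ {x}`. -/
def CoveredEdge {V : Type*} (E : V → V → Prop) (x y : V) : Prop :=
  E x y ∧ parents E x = parents E y \ {x}

/-- The set of covered edges of `E`, as ordered pairs. -/
def coveredEdges {V : Type*} (E : V → V → Prop) : Set (V × V) :=
  {p | CoveredEdge E p.1 p.2}

/-- The skeleton (undirected adjacency) of a directed graph. -/
def Skel {V : Type*} (E : V → V → Prop) (u v : V) : Prop := E u v ∨ E v u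

/-- `(u, v, w)` is a v-structure: `u → v ← w` with `u ≠ w` non-adjacent. -/
def VStruct {V : Type*} (E : V → V → Prop) (u v w : V) : Prop :=
  u ≠ w ∧ E u v ∧ E w v ∧ ¬ Skel E u w

/-- Two directed graphs are Markov equivalent: same skeleton and same v-structures. -/
def MarkovEquiv {V : Type*} (E E' : V → V → Prop) : Prop :=
  (∀ u v, Skel E u v ↔ Skel E' u v) ∧ (∀ u v w, VStruct E u v w ↔ VStruct E' u v w)

/-- Minimum vertex cover number of a set of (directed) edges. -/
noncomputable def mvc {V : Type*} [Fintype V] (F : Set (V × V)) : ℕ :=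
  sInf {n | ∃ S : Finset V, (∀ p ∈ F, p.1 ∈ S ∨ p.2 ∈ S) ∧ S.card = n}

/-- The graph obtained from `E` by reversing the arc `x → y` to `y → x`. -/
def reverseEdge {V : Type*} (E : V → V → Prop) (x y : V) : V → V → Prop :=
  fun u v => (E u v ∧ ¬(u = x ∧ v = y)) ∨ (u = y ∧ v = x)

/-- A moral DAG is a DAG with no v-structures. -/
def Moral {V : Type*} (E : V → V → Prop) : Prop := ∀ u v w, ¬ VStruct E u v w

/-- `w` is a direct child of `v`: `v → w` is an arc and there is no directed
path from `v` to `w` of length at least 2 (i.e. through an intermediate vertex). -/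
def DirectChild {V : Type*} (E : V → V → Prop) (v w : V) : Prop :=
  E v w ∧ ∀ z : V, ¬ (Relation.TransGen E v z ∧ Relation.TransGen E z w)


/-- The DAG on vertices `{a, b, c, d} = {0, 1, 2, 3}` with arcs `b → a`, `c → a`,
`c → b`, `c → d`. -/
def G₁ : Fin 4 → Fin 4 → Prop := fun u v =>
  (u = 1 ∧ v = 0) ∨ (u = 2 ∧ v = 0) ∨ (u = 2 ∧ v = 1) ∨ (u = 2 ∧ v = 3)

/-- The DAG on vertices `{a, b, c, d} = {0, 1, 2, 3}` with arcs `b → a`, `c → a`,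
`b → c`, `c → d`. -/
def G₂ : Fin 4 → Fin 4 → Prop := fun u v =>
  (u = 1 ∧ v = 0) ∨ (u = 2 ∧ v = 0) ∨ (u = 1 ∧ v = 2) ∨ (u = 2 ∧ v = 3)

section DAG

variable {V : Type*}

theorem isDAG_of_rank {α : Type*} [Preorder α] {E : V → V → Prop} (f : V → α)
    (hf : ∀ u v, E u v → f v < f u) : IsDAG E := fun v hv => by
  have h := Relation.TransGen.lift (p := (· > ·)) f hf v v hv
  rw [Relation.transGen_eq_self] at h
  exact lt_irrefl (f v) h

theorem markovEquiv_of_moral {E E' : V → V → Prop} (hskel : ∀ u v, Skel E u v ↔ Skel E' u v)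
    (hE : Moral E) (hE' : Moral E') : MarkovEquiv E E' :=
  ⟨hskel, fun u v w => iff_of_false (hE u v w) (hE' u v w)⟩

end DAG

section VertexCover

variable {V : Type*} [Fintype V] {F : Set (V × V)}

def IsVertexCover (F : Set (V × V)) (S : Finset V) : Prop :=
  ∀ p ∈ F, p.1 ∈ S ∨ p.2 ∈ S

theorem mvc_le_card {S : Finset V} (hS : IsVertexCover F S) : mvc F ≤ S.card :=
  Nat.sInf_le ⟨S, hS, rfl⟩

theorem le_mvc {n : ℕ} (h : ∀ S, IsVertexCover F S → n ≤ S.card) : n ≤ mvc F :=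
  le_csInf ⟨_, Finset.univ, fun p _ => .inl (Finset.mem_univ p.1), rfl⟩ <| by
    rintro _ ⟨S, hS, rfl⟩
    exact h S hS

theorem card_le_mvc_of_pairwiseDisjoint (M : Finset (V × V)) (hMF : ↑M ⊆ F)
    (hM : (M : Set (V × V)).PairwiseDisjoint fun p => ({p.1, p.2} : Set V)) :
    M.card ≤ mvc F := by
  classical
  refine le_mvc fun S hS => ?_
  let g : V × V → V := fun p => if p.1 ∈ S then p.1 else p.2
  have hg : ∀ p ∈ M, g p ∈ S ∧ g p ∈ ({p.1, p.2} : Set V) := fun p hp => by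
    by_cases h : p.1 ∈ S
    · simp [g, h]
    · simp [g, h, (hS p (hMF hp)).resolve_left h]
  exact Finset.card_le_card_of_injOn g (fun p hp => (hg p hp).1) fun p hp q hq hpq =>
    hM.elim_set hp hq (g p) (hg p hp).2 (hpq ▸ (hg q hq).2)

end VertexCover

theorem isDAG_G₁ : IsDAG G₁ :=
  isDAG_of_rank (fun v : Fin 4 => if v = 2 then 3 else if v = 1 then 1 else 0)
    (by simp only [G₁]; decide)

theorem isDAG_G₂ : IsDAG G₂ :=
  isDAG_of_rank (fun v : Fin 4 => if v = 1 then 3 else if v = 2 then 2 else 0)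
    (by simp only [G₂]; decide)

theorem skel_G₁_iff_skel_G₂ (u v : Fin 4) : Skel G₁ u v ↔ Skel G₂ u v := by
  revert u v
  simp only [Skel, G₁, G₂]
  decide

set_option synthInstance.maxSize 4000 in
theorem moral_G₁ : Moral G₁ := by
  simp only [Moral, VStruct, Skel, G₁]
  decide

set_option synthInstance.maxSize 4000 in
theorem moral_G₂ : Moral G₂ := by
  simp only [Moral, VStruct, Skel, G₂]
  decide

theorem coveredEdges_G₁ : coveredEdges G₁ = {(1, 0), (2, 1), (2, 3)} := by
  ext ⟨x, y⟩
  simp only [coveredEdges, CoveredEdge, parents, G₁, Set.ext_iff, Set.mem_ofPred_eq,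
    Set.mem_sdiff, Set.mem_singleton_iff, Set.mem_insert_iff, Prod.mk.injEq]
  revert x y
  decide

theorem coveredEdges_G₂ : coveredEdges G₂ = {(2, 0), (1, 2)} := by
  ext ⟨x, y⟩
  simp only [coveredEdges, CoveredEdge, parents, G₂, Set.ext_iff, Set.mem_ofPred_eq,
    Set.mem_sdiff, Set.mem_singleton_iff, Set.mem_insert_iff, Prod.mk.injEq]
  revert x y
  decide

theorem mvc_coveredEdges_G₁ : mvc (coveredEdges G₁) = 2 := by
  rw [coveredEdges_G₁]
  refine le_antisymm (mvc_le_card (S := {1, 2}) ?_) ?_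
  · simp only [IsVertexCover, Set.mem_insert_iff, Set.mem_singleton_iff]
    decide
  · refine card_le_mvc_of_pairwiseDisjoint ({(1, 0), (2, 3)} : Finset (Fin 4 × Fin 4))
      (by simp) ?_
    simp [Set.pairwiseDisjoint_insert, Set.disjoint_iff_forall_ne]

theorem mvc_coveredEdges_G₂ : mvc (coveredEdges G₂) = 1 := by
  rw [coveredEdges_G₂]
  refine le_antisymm (mvc_le_card (S := {2}) ?_) ?_
  · simp only [IsVertexCover, Set.mem_insert_iff, Set.mem_singleton_iff]
    decide
  · exact card_le_mvc_of_pairwiseDisjoint ({(2, 0)} : Finset (Fin 4 × Fin 4)) (by simp) (by simp)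

/-- `G₁` and `G₂` are Markov-equivalent DAGs with `mvc (C(G₁)) = 2` and
`mvc (C(G₂)) = 1`, so `mvc (C(G₁)) = 2 * mvc (C(G₂))`: the factor 2 in the
bound `mvc (C(G)) ≤ 2 * mvc (C(G'))` for Markov-equivalent DAGs is tight. -/
theorem tightness_of_two_approx :
    IsDAG G₁ ∧ IsDAG G₂ ∧ MarkovEquiv G₁ G₂ ∧
    mvc (coveredEdges G₁) = 2 ∧ mvc (coveredEdges G₂) = 1 ∧
    mvc (coveredEdges G₁) = 2 * mvc (coveredEdges G₂) :=
  ⟨isDAG_G₁, isDAG_G₂, markovEquiv_of_moral skel_G₁_iff_skel_G₂ moral_G₁ moral_G₂,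
    mvc_coveredEdges_G₁, mvc_coveredEdges_G₂,
    by rw [mvc_coveredEdges_G₁, mvc_coveredEdges_G₂]⟩
end

section
/- Let G be a DAG and let x→y be a covered edge of G. Let G' be the directed graph obtained from G by reversing x→y, i.e., E(G') = (E(G) \ {x→y}) ∪ {y→x}. Then G' is a DAG, and G and G' are Markov equivalent: they have the same skeleton and the same v-structures. -/
/-- Reversing a covered edge of a DAG yields a DAG which is Markov equivalent to the
original: same skeleton and same v-structures. -/
theorem reverseEdge_coveredEdge_isDAG_markovEquiv
    {V : Type*} (E : V → V → Prop) (x y : V)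
    (hE : IsDAG E) (hxy : CoveredEdge E x y) :
    IsDAG (reverseEdge E x y) ∧ MarkovEquiv E (reverseEdge E x y) := by
  obtain ⟨hexy, hpar⟩ := hxy
  have hpar' : ∀ u, E u x ↔ (E u y ∧ u ≠ x) := by
    intro u
    have := Set.ext_iff.mp hpar u
    simpa [parents, Set.mem_diff] using this
  have hxney : x ≠ y := by rintro rfl; exact hE x (Relation.TransGen.single hexy)
  set F : V → V → Prop := fun u v => E u v ∧ ¬(u = x ∧ v = y) with hF
  have hFE : ∀ u v, F u v → E u v := fun u v h => h.1
  -- skeleton equivalence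
  have hskel : ∀ u v, Skel E u v ↔ Skel (reverseEdge E x y) u v := by
    intro u v
    constructor
    · rintro (h | h)
      · by_cases hc : u = x ∧ v = y
        · exact Or.inr (Or.inr ⟨hc.2, hc.1⟩)
        · exact Or.inl (Or.inl ⟨h, hc⟩)
      · by_cases hc : v = x ∧ u = y
        · exact Or.inl (Or.inr ⟨hc.2, hc.1⟩)
        · exact Or.inr (Or.inl ⟨h, hc⟩)
    · rintro ((⟨h, -⟩ | ⟨rfl, rfl⟩) | (⟨h, -⟩ | ⟨rfl, rfl⟩))
      · exact Or.inl h
      · exact Or.inr hexy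
      · exact Or.inr h
      · exact Or.inl hexy
  -- path decomposition in the reversed graph
  have key : ∀ a b, Relation.TransGen (reverseEdge E x y) a b →
      Relation.TransGen F a b ∨
      (Relation.ReflTransGen F a y ∧ Relation.ReflTransGen F x b) := by
    intro a b h
    induction h with
    | single h' =>
        rcases h' with h' | ⟨rfl, rfl⟩
        · exact Or.inl (Relation.TransGen.single h')
        · exact Or.inr ⟨Relation.ReflTransGen.refl, Relation.ReflTransGen.refl⟩
    | tail hab hbc ih =>
        rcases hbc with hbc | ⟨rfl, rfl⟩
        · rcases ih with h1 | ⟨h1, h2⟩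
          · exact Or.inl (h1.tail hbc)
          · exact Or.inr ⟨h1, h2.tail hbc⟩
        · rcases ih with h1 | ⟨h1, h2⟩
          · exact Or.inr ⟨h1.to_reflTransGen, Relation.ReflTransGen.refl⟩
          · exact Or.inr ⟨h1, Relation.ReflTransGen.refl⟩
  -- acyclicity
  have hdag : IsDAG (reverseEdge E x y) := by
    intro v hv
    rcases key v v hv with h1 | ⟨h1, h2⟩
    · exact hE v (Relation.TransGen.mono hFE _ _ h1)
    · have hxy' : Relation.ReflTransGen F x y := h2.trans h1
      rcases Relation.reflTransGen_iff_eq_or_transGen.mp hxy' with h | h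
      · exact hxney h.symm
      · obtain ⟨w, hxw, hwy⟩ := Relation.TransGen.tail'_iff.mp h
        have hwx : w ≠ x := fun hwx => hwy.2 ⟨hwx, rfl⟩
        have hEwx : E w x := (hpar' w).mpr ⟨hwy.1, hwx⟩
        rcases Relation.reflTransGen_iff_eq_or_transGen.mp hxw with h' | h'
        · exact hE x (Relation.TransGen.single (h' ▸ hEwx))
        · exact hE x ((Relation.TransGen.mono hFE _ _ h').tail hEwx)
  -- v-structure equivalence
  have hv : ∀ u v w, VStruct E u v w ↔ VStruct (reverseEdge E x y) u v w := by
    intro u v w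
    constructor
    · rintro ⟨huw, huv, hwv, hna⟩
      refine ⟨huw, ?_, ?_, fun h => hna ((hskel u w).mpr h)⟩
      · left
        refine ⟨huv, ?_⟩
        rintro ⟨rfl, rfl⟩
        exact hna (Or.inr ((hpar' w).mpr ⟨hwv, Ne.symm huw⟩))
      · left
        refine ⟨hwv, ?_⟩
        rintro ⟨rfl, rfl⟩
        exact hna (Or.inl ((hpar' u).mpr ⟨huv, huw⟩))
    · rintro ⟨huw, huv, hwv, hna⟩
      have hna' : ¬ Skel E u w := fun h => hna ((hskel u w).mp h)
      refine ⟨huw, ?_, ?_, hna'⟩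
      · rcases huv with ⟨h, -⟩ | ⟨rfl, rfl⟩
        · exact h
        · rcases hwv with ⟨h, -⟩ | ⟨rfl, -⟩
          · exact absurd (Or.inr ((hpar' w).mp h).1) hna'
          · exact absurd rfl huw
      · rcases hwv with ⟨h, -⟩ | ⟨rfl, rfl⟩
        · exact h
        · rcases huv with ⟨h, -⟩ | ⟨rfl, -⟩
          · exact absurd (Or.inl ((hpar' u).mp h).1) hna'
          · exact absurd rfl huw
  exact ⟨hdag, hskel, hv⟩
end

section
/- Let G be a moral DAG (a DAG with no v-structures) with covered edge x→y, and let G' be the DAG obtained from G by reversing x→y to y→x. Then for every edge e of G neither of whose endpoints lies in {x,y} (such e is also an edge of G'), e is a covered edge of G if and only if e is a covered edge of G'. -/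
/-! Reversing `x → y` changes only the parent sets of `x` and `y`, while whether `u → v` is
covered depends only on the parent sets of `u` and `v`. -/

theorem reverseEdge_iff_of_ne {V : Type*} {E : V → V → Prop} {x y a b : V}
    (hbx : b ≠ x) (hby : b ≠ y) : reverseEdge E x y a b ↔ E a b := by
  simp only [reverseEdge, hby, hbx, and_false, or_false, not_false_eq_true, and_true]

theorem parents_reverseEdge_of_ne {V : Type*} {E : V → V → Prop} {x y v : V}
    (hvx : v ≠ x) (hvy : v ≠ y) : parents (reverseEdge E x y) v = parents E v :=
  Set.ext fun _ => reverseEdge_iff_of_ne hvx hvy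

theorem coveredEdge_congr_of_parents_eq {V : Type*} {E E' : V → V → Prop} {u v : V}
    (hu : parents E u = parents E' u) (hv : parents E v = parents E' v) :
    CoveredEdge E u v ↔ CoveredEdge E' u v := by
  have hedge : E u v ↔ E' u v := Set.ext_iff.mp hv u
  rw [CoveredEdge, CoveredEdge, hu, hv, hedge]

theorem coveredEdge_reverse_of_disjoint_endpoints_general
    {V : Type*} (E : V → V → Prop) (x y : V)
    (u v : V)
    (hux : u ≠ x) (huy : u ≠ y) (hvx : v ≠ x) (hvy : v ≠ y) :
    CoveredEdge E u v ↔ CoveredEdge (reverseEdge E x y) u v :=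
  coveredEdge_congr_of_parents_eq (parents_reverseEdge_of_ne hux huy).symm
    (parents_reverseEdge_of_ne hvx hvy).symm

/-- In a moral DAG with covered edge `x → y`, reversing `x → y` leaves the covered-edge
status of every edge with no endpoint in `{x, y}` unchanged. -/
theorem coveredEdge_reverse_of_disjoint_endpoints
    {V : Type*} (E : V → V → Prop) (x y : V)
    (hE : IsDAG E) (hm : Moral E) (hxy : CoveredEdge E x y)
    (u v : V) (huv : E u v)
    (hux : u ≠ x) (huy : u ≠ y) (hvx : v ≠ x) (hvy : v ≠ y) :
    CoveredEdge E u v ↔ CoveredEdge (reverseEdge E x y) u v :=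
  coveredEdge_reverse_of_disjoint_endpoints_general E x y u v hux huy hvx hvy
end

section
/- In any DAG G, each vertex is the head of at most one covered edge: if u→x and v→x are both covered edges of G, then u = v. -/
theorem CoveredEdge.rel_tail_of_rel_head {V : Type*} {E : V → V → Prop} {x y z : V}
    (h : CoveredEdge E x y) (hzy : E z y) (hzx : z ≠ x) : E z x :=
  (h.2 ▸ ⟨hzy, hzx⟩ : z ∈ parents E x)

/-- In a DAG, each vertex is the head of at most one covered edge. -/
theorem coveredEdge_head_unique
    {V : Type*} (E : V → V → Prop) (u v x : V)
    (hE : IsDAG E) (hux : CoveredEdge E u x) (hvx : CoveredEdge E v x) :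
    u = v := by
  by_contra huv
  have h_uv : E u v := hvx.rel_tail_of_rel_head hux.1 huv
  have h_vu : E v u := hux.rel_tail_of_rel_head hvx.1 (Ne.symm huv)
  exact hE u (.head h_uv (.single h_vu))
end

section
/- Two DAGs G and G' on the same finite vertex set are Markov equivalent (same skeleton and same v-structures) if and only if there exists a finite sequence of DAGs G = G₀, G₁, …, G_m = G' such that for each i, G_{i+1} is obtained from G_i by reversing a single covered edge of G_i (i.e., there is an edge x→y ∈ C(G_i) with E(G_{i+1}) = (E(G_i) \ {x→y}) ∪ {y→x}). -/
section ChickeringAux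

open Relation

variable {V : Type*}

lemma noSelf {E : V → V → Prop} (h : IsDAG E) {u : V} : ¬ E u u :=
  fun hu => h u (TransGen.single hu)

lemma noTwo {E : V → V → Prop} (h : IsDAG E) {u v : V} (huv : E u v) : ¬ E v u :=
  fun hvu => h u (TransGen.head huv (TransGen.single hvu))

lemma noThree {E : V → V → Prop} (h : IsDAG E) {u v w : V} (huv : E u v) (hvw : E v w) :
    ¬ E w u :=
  fun hwu => h u (TransGen.head huv (TransGen.head hvw (TransGen.single hwu)))

lemma cov_iff {E : V → V → Prop} {x y : V} (hc : CoveredEdge E x y) :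
    ∀ u, E u x ↔ (E u y ∧ u ≠ x) := by
  intro u
  have := Set.ext_iff.mp hc.2 u
  simpa [parents, Set.mem_diff] using this

lemma markovEquiv_refl (E : V → V → Prop) : MarkovEquiv E E :=
  ⟨fun _ _ => Iff.rfl, fun _ _ _ => Iff.rfl⟩

lemma markovEquiv_symm {E F : V → V → Prop} (h : MarkovEquiv E F) : MarkovEquiv F E :=
  ⟨fun u v => (h.1 u v).symm, fun u v w => (h.2 u v w).symm⟩

lemma markovEquiv_trans {E F G : V → V → Prop} (h1 : MarkovEquiv E F) (h2 : MarkovEquiv F G) :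
    MarkovEquiv E G :=
  ⟨fun u v => (h1.1 u v).trans (h2.1 u v), fun u v w => (h1.2 u v w).trans (h2.2 u v w)⟩

noncomputable def rnk [Fintype V] (E : V → V → Prop) (v : V) : ℕ :=
  {u | Relation.TransGen E u v}.ncard

lemma rnk_lt [Fintype V] {E : V → V → Prop} (h : IsDAG E) {u v : V} (huv : E u v) :
    rnk E u < rnk E v := by
  apply Set.ncard_lt_ncard ?_ (Set.toFinite _)
  rw [Set.ssubset_def]
  constructor
  · intro a ha
    exact TransGen.tail ha huv
  · intro hsub
    have hu : u ∈ {a | Relation.TransGen E a v} := TransGen.single huv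
    exact h u (hsub hu)

lemma rev_path {E : V → V → Prop} {x y a b : V}
    (h : Relation.TransGen (reverseEdge E x y) a b) :
    Relation.TransGen (fun u v => E u v ∧ ¬(u = x ∧ v = y)) a b ∨
      (Relation.ReflTransGen (fun u v => E u v ∧ ¬(u = x ∧ v = y)) a y ∧
       Relation.ReflTransGen (fun u v => E u v ∧ ¬(u = x ∧ v = y)) x b) := by
  induction h with
  | single h =>
    rcases h with h | ⟨rfl, rfl⟩
    · exact Or.inl (TransGen.single h)
    · exact Or.inr ⟨ReflTransGen.refl, ReflTransGen.refl⟩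
  | tail h₂ h₃ ih =>
    rcases h₃ with h₃ | ⟨rfl, rfl⟩
    · rcases ih with ih | ⟨ih1, ih2⟩
      · exact Or.inl (ih.tail h₃)
      · exact Or.inr ⟨ih1, ih2.tail h₃⟩
    · rcases ih with ih | ⟨ih1, ih2⟩
      · exact Or.inr ⟨ih.to_reflTransGen, ReflTransGen.refl⟩
      · exact Or.inr ⟨ih1, ReflTransGen.refl⟩

lemma isDAG_rev {E : V → V → Prop} (hE : IsDAG E) {x y : V} (hc : CoveredEdge E x y) :
    IsDAG (reverseEdge E x y) := by
  intro v hv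
  have hP := cov_iff hc
  have hxy := hc.1
  rcases rev_path hv with h | ⟨h1, h2⟩
  · exact hE v (h.lift id fun _ _ hab => hab.1)
  · have hxny : x ≠ y := fun h => noSelf hE (h ▸ hxy)
    have hxy' : Relation.ReflTransGen (fun u v => E u v ∧ ¬(u = x ∧ v = y)) x y :=
      h2.trans h1
    rcases Relation.reflTransGen_iff_eq_or_transGen.mp hxy' with h | h
    · exact hxny h.symm
    · obtain ⟨w, hw1, hw2⟩ := Relation.TransGen.tail'_iff.mp h
      have hwx : w ≠ x := fun hwx => hw2.2 ⟨hwx, rfl⟩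
      have hEwx : E w x := (hP w).mpr ⟨hw2.1, hwx⟩
      rcases Relation.reflTransGen_iff_eq_or_transGen.mp hw1 with h' | h'
      · exact hwx h'
      · exact hE x (TransGen.tail (h'.lift id fun _ _ hab => hab.1) hEwx)

lemma markov_rev {E : V → V → Prop} (hE : IsDAG E) {x y : V} (hc : CoveredEdge E x y) :
    MarkovEquiv E (reverseEdge E x y) := by
  have hP := cov_iff hc
  have hxy := hc.1
  have hskel : ∀ u v, Skel E u v ↔ Skel (reverseEdge E x y) u v := by
    intro u v
    constructor
    · rintro (h | h)
      · by_cases hp : u = x ∧ v = y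
        · exact Or.inr (Or.inr ⟨hp.2, hp.1⟩)
        · exact Or.inl (Or.inl ⟨h, hp⟩)
      · by_cases hp : v = x ∧ u = y
        · exact Or.inl (Or.inr ⟨hp.2, hp.1⟩)
        · exact Or.inr (Or.inl ⟨h, hp⟩)
    · rintro ((⟨h, _⟩ | ⟨rfl, rfl⟩) | (⟨h, _⟩ | ⟨rfl, rfl⟩))
      · exact Or.inl h
      · exact Or.inr hxy
      · exact Or.inr h
      · exact Or.inl hxy
  refine ⟨hskel, fun u v w => ?_⟩
  constructor
  · rintro ⟨huw, huv, hwv, hns⟩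
    refine ⟨huw, ?_, ?_, fun hs => hns ((hskel u w).mpr hs)⟩
    · by_cases hp : u = x ∧ v = y
      · exfalso
        obtain ⟨rfl, rfl⟩ := hp
        exact hns (Or.inr ((hP w).mpr ⟨hwv, Ne.symm huw⟩))
      · exact Or.inl ⟨huv, hp⟩
    · by_cases hp : w = x ∧ v = y
      · exfalso
        obtain ⟨rfl, rfl⟩ := hp
        exact hns (Or.inl ((hP u).mpr ⟨huv, huw⟩))
      · exact Or.inl ⟨hwv, hp⟩
  · rintro ⟨huw, huv, hwv, hns⟩
    have hns' : ¬ Skel E u w := fun hs => hns ((hskel u w).mp hs)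
    refine ⟨huw, ?_, ?_, hns'⟩
    · rcases huv with ⟨h, _⟩ | hyx
      · exact h
      · exfalso
        obtain ⟨hu, hv⟩ := hyx
        rcases hwv with ⟨h, _⟩ | hwx2
        · rw [hv] at h
          have h2 := ((hP w).mp h).1
          exact hns' (Or.inr (by rw [hu]; exact h2))
        · exact huw (hu.trans hwx2.1.symm)
    · rcases hwv with ⟨h, _⟩ | hyx
      · exact h
      · exfalso
        obtain ⟨hw, hv⟩ := hyx
        rcases huv with ⟨h, _⟩ | hux2
        · rw [hv] at h
          have h2 := ((hP u).mp h).1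
          exact hns' (Or.inl (by rw [hw]; exact h2))
        · exact huw (hux2.1.trans hw.symm)

lemma chickering [Fintype V] {E E' : V → V → Prop} (hE : IsDAG E) (hE' : IsDAG E')
    (hM : MarkovEquiv E E') (hne : ∃ p : V × V, E p.1 p.2 ∧ E' p.2 p.1) :
    ∃ x y, CoveredEdge E x y ∧ E' y x := by
  classical
  obtain ⟨p, hp⟩ := hne
  have hskel := hM.1
  have hvs := hM.2
  -- choose y minimizing rnk among heads of differing edges
  set Heads : Finset V := Finset.univ.filter (fun b => ∃ a, E a b ∧ E' b a) with hHeads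
  have hyH : p.2 ∈ Heads := by
    simp only [hHeads, Finset.mem_filter, Finset.mem_univ, true_and]
    exact ⟨p.1, hp⟩
  obtain ⟨y, hyIn, hymin'⟩ := Heads.exists_min_image (rnk E) ⟨p.2, hyH⟩
  have hymin : ∀ b a, E a b → E' b a → rnk E y ≤ rnk E b := by
    intro b a h1 h2
    refine hymin' b ?_
    simp only [hHeads, Finset.mem_filter, Finset.mem_univ, true_and]
    exact ⟨a, h1, h2⟩
  obtain ⟨x0, hx0⟩ : ∃ a, E a y ∧ E' y a := by
    simpa only [hHeads, Finset.mem_filter, Finset.mem_univ, true_and] using hyIn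
  set S : Finset V := Finset.univ.filter (fun a => E a y ∧ E' y a) with hS
  have hx0S : x0 ∈ S := by
    simp only [hS, Finset.mem_filter, Finset.mem_univ, true_and]; exact hx0
  obtain ⟨x, hxIn, hxmax'⟩ := S.exists_max_image (rnk E) ⟨x0, hx0S⟩
  obtain ⟨hExy, hE'yx⟩ : E x y ∧ E' y x := by
    simpa only [hS, Finset.mem_filter, Finset.mem_univ, true_and] using hxIn
  have hxmax : ∀ a, E a y → E' y a → rnk E a ≤ rnk E x := by
    intro a h1 h2
    refine hxmax' a ?_
    simp only [hS, Finset.mem_filter, Finset.mem_univ, true_and]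
    exact ⟨h1, h2⟩
  refine ⟨x, y, ⟨hExy, Set.ext fun z => ?_⟩, hE'yx⟩
  simp only [parents, Set.mem_setOf_eq, Set.mem_diff, Set.mem_singleton_iff]
  constructor
  · -- E z x → E z y ∧ z ≠ x
    intro hzx
    have hznex : z ≠ x := fun h => noSelf hE (h ▸ hzx)
    have hE'zx : E' z x := by
      have : Skel E' z x := (hskel z x).mp (Or.inl hzx)
      rcases this with h | h
      · exact h
      · exfalso
        have := hymin x z hzx h
        exact absurd (rnk_lt hE hExy) (by omega)
    have hzney : z ≠ y := fun h => noTwo hE hExy (h ▸ hzx)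
    have hSzy : Skel E z y := by
      by_contra hns
      have hns' : ¬ Skel E' z y := fun hs => hns ((hskel z y).mpr hs)
      have hv : VStruct E' z x y := ⟨hzney, hE'zx, hE'yx, hns'⟩
      have := (hvs z x y).mpr hv
      exact noTwo hE hExy this.2.2.1
    rcases hSzy with h | h
    · exact ⟨h, hznex⟩
    · exact absurd hzx (noThree hE hExy h)
  · -- E z y ∧ z ≠ x → E z x
    rintro ⟨hzy, hznex⟩
    have hSzx : Skel E z x := by
      by_contra hns
      have hv : VStruct E z y x := ⟨hznex, hzy, hExy, hns⟩
      have := (hvs z y x).mp hv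
      exact noTwo hE' hE'yx this.2.2.1
    rcases hSzx with h | h
    · exact h
    · -- h : E x z, derive contradiction
      exfalso
      by_cases hd : E' y z
      · have := hxmax z hzy hd
        exact absurd (rnk_lt hE h) (by omega)
      · have hE'zy : E' z y := by
          rcases (hskel z y).mp (Or.inl hzy) with h' | h'
          · exact h'
          · exact absurd h' hd
        have hE'zx : E' z x := by
          rcases (hskel x z).mp (Or.inl h) with h' | h'
          · exact absurd hE'yx (noThree hE' h' hE'zy)
          · exact h'
        have := hymin z x h hE'zx
        exact absurd (rnk_lt hE hzy) (by omega)

end ChickeringAux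

/-- One step of the covered-edge-reversal relation: `E'` is obtained from the DAG `E`
by reversing a single covered edge of `E`. -/
def CovRevStep {V : Type*} (E E' : V → V → Prop) : Prop :=
  IsDAG E ∧ ∃ x y : V, CoveredEdge E x y ∧ ∀ u v, E' u v ↔ reverseEdge E x y u v

lemma covrev_markov {V : Type*} {A B : V → V → Prop} (h : CovRevStep A B) : MarkovEquiv A B := by
  obtain ⟨hA, x, y, hc, hiff⟩ := h
  have hB : B = reverseEdge A x y := by
    funext u v; exact propext (hiff u v)
  rw [hB]
  exact markov_rev hA hc

/-- Two DAGs on the same finite vertex set are Markov equivalent if and only if one can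
be transformed into the other by a finite sequence of covered edge reversals. -/
theorem markovEquiv_iff_covered_edge_reversal_sequence
    {V : Type*} [Fintype V] (E E' : V → V → Prop)
    (hE : IsDAG E) (hE' : IsDAG E') :
    MarkovEquiv E E' ↔ Relation.ReflTransGen CovRevStep E E' := by
  constructor
  · intro hM
    have key : ∀ n (F : V → V → Prop), IsDAG F → MarkovEquiv F E' →
        {p : V × V | F p.1 p.2 ∧ E' p.2 p.1}.ncard ≤ n →
        Relation.ReflTransGen CovRevStep F E' := by
      intro n
      induction n with
      | zero =>
        intro F hF hMF hcard
        have hemp : {p : V × V | F p.1 p.2 ∧ E' p.2 p.1} = ∅ :=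
          (Set.ncard_eq_zero (Set.toFinite _)).mp (Nat.le_zero.mp hcard)
        have hFE : F = E' := by
          funext u v
          apply propext
          constructor
          · intro h
            rcases (hMF.1 u v).mp (Or.inl h) with h' | h'
            · exact h'
            · exact (Set.eq_empty_iff_forall_notMem.mp hemp (u, v) ⟨h, h'⟩).elim
          · intro h
            rcases (hMF.1 u v).mpr (Or.inl h) with h' | h'
            · exact h'
            · exact (Set.eq_empty_iff_forall_notMem.mp hemp (v, u) ⟨h', h⟩).elim
        rw [hFE]
      | succ n ih =>
        intro F hF hMF hcard
        by_cases hne : ∃ p : V × V, F p.1 p.2 ∧ E' p.2 p.1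
        · obtain ⟨x, y, hcov, hrev⟩ := chickering hF hE' hMF hne
          have hstep : CovRevStep F (reverseEdge F x y) :=
            ⟨hF, x, y, hcov, fun u v => Iff.rfl⟩
          refine Relation.ReflTransGen.head hstep ?_
          have hseteq : {p : V × V | reverseEdge F x y p.1 p.2 ∧ E' p.2 p.1} =
              {p : V × V | F p.1 p.2 ∧ E' p.2 p.1} \ {(x, y)} := by
            ext ⟨u, v⟩
            simp only [Set.mem_setOf_eq, Set.mem_diff, Set.mem_singleton_iff, Prod.mk.injEq]
            constructor
            · rintro ⟨(⟨h1, h2⟩ | ⟨rfl, rfl⟩), h3⟩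
              · exact ⟨⟨h1, h3⟩, h2⟩
              · exact absurd h3 (noTwo hE' hrev)
            · rintro ⟨⟨h1, h2⟩, h3⟩
              exact ⟨Or.inl ⟨h1, h3⟩, h2⟩
          apply ih
          · exact isDAG_rev hF hcov
          · exact markovEquiv_trans (markovEquiv_symm (markov_rev hF hcov)) hMF
          · rw [hseteq]
            have hmem : (x, y) ∈ {p : V × V | F p.1 p.2 ∧ E' p.2 p.1} := ⟨hcov.1, hrev⟩
            have := Set.ncard_diff_singleton_lt_of_mem hmem (Set.toFinite _)
            omega
        · have hemp : {p : V × V | F p.1 p.2 ∧ E' p.2 p.1} = ∅ :=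
            Set.eq_empty_iff_forall_notMem.mpr (fun p hp => hne ⟨p, hp⟩)
          have hFE : F = E' := by
            funext u v
            apply propext
            constructor
            · intro h
              rcases (hMF.1 u v).mp (Or.inl h) with h' | h'
              · exact h'
              · exact (Set.eq_empty_iff_forall_notMem.mp hemp (u, v) ⟨h, h'⟩).elim
            · intro h
              rcases (hMF.1 u v).mpr (Or.inl h) with h' | h'
              · exact h'
              · exact (Set.eq_empty_iff_forall_notMem.mp hemp (v, u) ⟨h', h⟩).elim
          rw [hFE]
    exact key _ E hE hM le_rfl
  · intro h
    clear hE'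
    induction h with
    | refl => exact markovEquiv_refl E
    | tail _ hstep ih => exact markovEquiv_trans ih (covrev_markov hstep)
end

section
/- For any DAG G, the undirected graph whose edge set is {{u,v} : u→v is a covered edge of G} (the skeleton of the edge-induced subgraph on the covered edges C(G)) is a forest, i.e., it contains no cycles. -/
/-!
Every vertex is the head of at most one covered edge: two covered edges `x → y ← z` with
`x ≠ z` would force `x ∈ Pa(z)` and `z ∈ Pa(x)`, a directed 2-cycle. In an orientation where
every vertex has in-degree at most one, a forward step along a cycle can only be followed by
another forward step, since the alternative would make the cycle backtrack. Hence an undirected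
cycle of covered edges is a directed cycle of the DAG, one way round or the other.
-/

open SimpleGraph Relation

namespace SimpleGraph.Walk

variable {V : Type*} {r : V → V → Prop}

lemma IsCycle.rel_getVert_succ_of_rel_snd (hr : ∀ x z y, r x y → r z y → x = z) {u : V}
    {c : (fromRel r).Walk u u} (hc : c.IsCycle) (h₀ : r u c.snd) :
    ∀ i < c.length, r (c.getVert i) (c.getVert (i + 1)) := by
  intro i hi
  induction i with
  | zero => simpa using h₀
  | succ i ih =>
    have hadj := (fromRel_adj _ _ _).mp (c.adj_getVert_succ hi)
    refine hadj.2.resolve_right fun hback => ?_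
    exact hc.getVert_sub_one_ne_getVert_add_one (i := i + 1) hi.le (hr _ _ _ (ih (by omega)) hback)

lemma IsCycle.transGen_of_rel_snd (hr : ∀ x z y, r x y → r z y → x = z) {u : V}
    {c : (fromRel r).Walk u u} (hc : c.IsCycle) (h₀ : r u c.snd) : TransGen r u u := by
  have hchain : TransGen (fun i j => r (c.getVert i) (c.getVert j)) 0 c.length :=
    transGen_of_succ_of_lt _ (fun i hi => hc.rel_getVert_succ_of_rel_snd hr h₀ i hi.2)
      (by have := hc.three_le_length; omega)
  simpa [Function.onFun] using hchain.lift c.getVert fun _ _ h => h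

end SimpleGraph.Walk

lemma SimpleGraph.fromRel_isAcyclic {V : Type*} {r : V → V → Prop}
    (hcyc : ∀ v, ¬ TransGen r v v) (hr : ∀ x z y, r x y → r z y → x = z) :
    (fromRel r).IsAcyclic := by
  intro u c hc
  rcases ((fromRel_adj _ _ _).mp (c.adj_snd hc.not_nil)).2 with hfst | hfst
  · exact hcyc u (hc.transGen_of_rel_snd hr hfst)
  -- The first step enters `u`, so the last one leaves it: reversed, the cycle starts forward.
  rcases ((fromRel_adj _ _ _).mp (c.adj_penultimate hc.not_nil)).2 with hlst | hlst
  · exact hc.snd_ne_penultimate (hr _ _ _ hfst hlst)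
  · exact hcyc u (hc.reverse.transGen_of_rel_snd hr (by rwa [Walk.snd_reverse]))

lemma IsDAG.asymm {V : Type*} {E : V → V → Prop} (hE : IsDAG E) {x y : V} (h : E x y) :
    ¬ E y x :=
  fun h' => hE x (.tail (.single h) h')

lemma CoveredEdge.tail_eq {V : Type*} {E : V → V → Prop} (hE : ∀ x y, E x y → ¬ E y x)
    {x z y : V} (hx : CoveredEdge E x y) (hz : CoveredEdge E z y) : x = z := by
  by_contra hne
  have hxz : x ∈ parents E z := hz.2 ▸ ⟨hx.1, hne⟩
  have hzx : z ∈ parents E x := hx.2 ▸ ⟨hz.1, Ne.symm hne⟩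
  exact hE x z hxz hzx

/-- For any DAG, the undirected graph on the covered edges (the skeleton of the
edge-induced subgraph on `C(G)`) is a forest: it contains no cycles. -/
theorem coveredEdges_skeleton_isAcyclic
    {V : Type*} (E : V → V → Prop) (hE : IsDAG E) :
    (SimpleGraph.fromRel (fun u v => CoveredEdge E u v)).IsAcyclic :=
  fromRel_isAcyclic (fun v h => hE v (TransGen.mono (fun _ _ => And.left) v v h))
    (fun _ _ _ => CoveredEdge.tail_eq fun _ _ => hE.asymm)
end

section
/- For integers n ≥ 1 and a ≥ 2, let ℓ = ⌈log_a n⌉. There exists an injective labelling f assigning to each element of [n] a word of length ℓ over the alphabet {0, 1, …, a} (of size a+1) such that in every digit position d ∈ [ℓ], each letter of the alphabet is used at most ⌈n/a⌉ times, i.e., for every d and every letter c, |{i ∈ [n] : the d-th letter of f(i) equals c}| ≤ ⌈n/a⌉. In particular, this labelling is a separating system: for any distinct i, j ∈ [n] there exists a digit position d ∈ [ℓ] where the labels of i and j differ. -/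
/-!
Cut `[n]` into blocks of `m = ⌈n / a⌉` consecutive elements, so that `i = q * m + r` with block
index `q < a` and `r < m ≤ a ^ (ℓ - 1)`. Position `0` of the label of `i` is `q`, and position
`t + 1` is the `t`-th base-`a` digit of `r` shifted by `q` in `ℤ / (a + 1)`. The block index and the
digits recover `i`. In a fixed position `r` determines the unshifted letter, hence a letter `c`
determines `q`; so `i ↦ r` is injective on the elements labelled `c` there, and there are at most
`m` of them.
-/

open Finset

theorem Nat.mod_pow_eq_of_div_pow_mod_eq {a k x y : ℕ}
    (h : ∀ t < k, x / a ^ t % a = y / a ^ t % a) : x % a ^ k = y % a ^ k := by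
  induction k with
  | zero => simp only [pow_zero, Nat.mod_one]
  | succ k ih =>
    rw [Nat.mod_pow_succ, Nat.mod_pow_succ, ih fun t ht => h t (by omega), h k k.lt_succ_self]

namespace LabellingScheme

def offset (a r : ℕ) : ℕ → ℕ
  | 0 => 0
  | t + 1 => r / a ^ t % a

def letter (a m i d : ℕ) : ℕ := (offset a (i % m) d + i / m) % (a + 1)

variable {a m : ℕ}

theorem div_eq_of_letter_eq {i j d : ℕ} (hi : i / m < a + 1) (hj : j / m < a + 1)
    (hoffset : offset a (i % m) d = offset a (j % m) d) (h : letter a m i d = letter a m j d) :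
    i / m = j / m := by
  unfold letter at h
  rw [hoffset] at h
  exact (Nat.ModEq.add_left_cancel' _ h).eq_of_lt_of_lt hi hj

theorem card_filter_letter_eq_le (hm : 0 < m) {s : Finset ℕ} (hs : ∀ i ∈ s, i / m < a + 1)
    (d c : ℕ) : #{i ∈ s | letter a m i d = c} ≤ m := by
  calc #{i ∈ s | letter a m i d = c}
      ≤ #(range m) := by
        refine card_le_card_of_injOn (· % m) (fun i _ => mem_range.2 (Nat.mod_lt i hm)) ?_
        intro i hi j hj (hij : i % m = j % m)
        simp only [mem_coe, mem_filter] at hi hj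
        exact Nat.ext_div_modEq
          (div_eq_of_letter_eq (hs i hi.1) (hs j hj.1) (congrArg (offset a · d) hij) (hi.2.trans hj.2.symm)) hij
    _ = m := card_range m

theorem eq_of_letter_eq (ha : 0 < a) (hm : 0 < m) {k i j : ℕ} (hmk : m ≤ a ^ k)
    (hi : i / m < a + 1) (hj : j / m < a + 1)
    (h : ∀ d < k + 1, letter a m i d = letter a m j d) : i = j := by
  have hq : i / m = j / m := div_eq_of_letter_eq hi hj rfl (h 0 k.succ_pos)
  have hdigits : ∀ t < k, i % m / a ^ t % a = j % m / a ^ t % a := by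
    intro t ht
    have hletter := h (t + 1) (by omega)
    unfold letter offset at hletter
    rw [hq] at hletter
    exact (Nat.ModEq.add_right_cancel' _ hletter).eq_of_lt_of_lt
      ((Nat.mod_lt _ ha).trans a.lt_succ_self) ((Nat.mod_lt _ ha).trans a.lt_succ_self)
  have hlt : ∀ x, x % m < a ^ k := fun x => (Nat.mod_lt x hm).trans_le hmk
  have hmod := Nat.mod_pow_eq_of_div_pow_mod_eq hdigits
  rw [Nat.mod_eq_of_lt (hlt i), Nat.mod_eq_of_lt (hlt j)] at hmod
  exact Nat.ext_div_modEq hq hmod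

end LabellingScheme

open LabellingScheme in
/-- Labelling scheme (Lemma 1 of Shanmugam et al.): for `n ≥ 1` and `a ≥ 2` there is an
injective labelling of `[n]` by words of length `ℓ = ⌈log_a n⌉` over the alphabet
`{0, 1, …, a}` such that in every digit position each letter is used at most `⌈n / a⌉`
times; in particular the labelling is a separating system. -/
theorem labelling_scheme (n a : ℕ) (hn : 1 ≤ n) (ha : 2 ≤ a) :
    ∃ f : Fin n → (Fin (Nat.clog a n) → Fin (a + 1)),
      Function.Injective f ∧
      (∀ (d : Fin (Nat.clog a n)) (c : Fin (a + 1)),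
        (Finset.univ.filter (fun i : Fin n => f i d = c)).card ≤ (n + a - 1) / a) ∧
      (∀ i j : Fin n, i ≠ j → ∃ d : Fin (Nat.clog a n), f i d ≠ f j d) := by
  have ha0 : 0 < a := by omega
  rw [← Nat.ceilDiv_eq_add_pred_div]
  set m := n ⌈/⌉ a
  have hnm : n ≤ a * m := (ceilDiv_le_iff_le_mul ha0).1 le_rfl
  have hm : 0 < m := Nat.pos_of_ne_zero fun hm0 => by rw [hm0] at hnm; omega
  have hq : ∀ i < n, i / m < a + 1 := fun i hi =>
    (Nat.div_lt_of_lt_mul (mul_comm a m ▸ hi.trans_le hnm)).trans a.lt_succ_self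
  let f : Fin n → Fin (Nat.clog a n) → Fin (a + 1) :=
    fun i d => ⟨letter a m i d, Nat.mod_lt _ a.succ_pos⟩
  have hf : Function.Injective f := by
    intro i j hij
    rcases Nat.lt_or_ge n 2 with hn1 | hn2
    · exact Fin.ext (by omega)
    obtain ⟨k, hk⟩ := Nat.exists_eq_add_one_of_ne_zero (Nat.clog_pos ha hn2).ne'
    have hmk : m ≤ a ^ k :=
      (ceilDiv_le_iff_le_mul ha0).2 (pow_succ' a k ▸ hk ▸ Nat.le_pow_clog ha n)
    exact Fin.ext (eq_of_letter_eq ha0 hm hmk (hq i i.2) (hq j j.2)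
      fun d hd => congrArg Fin.val (congrFun hij ⟨d, hk ▸ hd⟩))
  refine ⟨f, hf, fun d c => ?_, fun i j hij => Function.ne_iff.1 (hf.ne hij)⟩
  calc #{i | f i d = c}
      ≤ #{i ∈ range n | letter a m i d = c} := by
        refine card_le_card_of_injOn Fin.val (fun i hi => ?_) Fin.val_injective.injOn
        simp only [mem_coe, mem_filter, mem_univ, true_and, mem_range] at hi ⊢
        exact ⟨i.2, congrArg Fin.val hi⟩
    _ ≤ m := card_filter_letter_eq_le hm (fun i hi => hq i (mem_range.1 hi)) d c
end

section
/- Let G be a DAG, let ℓ = mvc(C(G)) be the minimum vertex cover number of its covered edges, and let k ≥ 1 be an integer. Then: (i) every finite family I of vertex subsets, each of size at most k, such that every covered edge of G is separated by some member of I (i.e., for every covered edge u→v there exists S ∈ I with exactly one of u, v in S), satisfies |I| ≥ ⌈ℓ/k⌉; and (ii) there exists such a family I with |I| ≤ ⌈ℓ/k⌉ + 1. -/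
/-- Chunking: any finset can be covered by at most `⌈n/k⌉` subsets of itself, each of size ≤ k. -/
lemma chunk_lemma {V : Type*} [DecidableEq V] (k : ℕ) (hk : 1 ≤ k) (T : Finset V) :
    ∃ I : Finset (Finset V), (∀ S ∈ I, S.card ≤ k ∧ S ⊆ T) ∧
      (∀ v ∈ T, ∃ S ∈ I, v ∈ S) ∧ I.card ≤ (T.card + k - 1) / k := by
  induction T using Finset.strongInductionOn with
  | _ T ih =>
    rcases T.eq_empty_or_nonempty with rfl | hne
    · exact ⟨∅, by simp, by simp, by simp⟩
    · have hn1 : 1 ≤ T.card := Finset.card_pos.mpr hne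
      obtain ⟨A, hAT, hAcard⟩ := Finset.exists_subset_card_eq (s := T) (min_le_right k T.card)
      have hA1 : 1 ≤ A.card := by rw [hAcard]; omega
      have hAne : A.Nonempty := Finset.card_pos.mp hA1
      have hssub : T \ A ⊂ T := by
        obtain ⟨a, ha⟩ := hAne
        exact Finset.ssubset_iff_of_subset Finset.sdiff_subset |>.mpr
          ⟨a, hAT ha, by simp [ha]⟩
      obtain ⟨I', hI'1, hI'2, hI'3⟩ := ih _ hssub
      refine ⟨insert A I', ?_, ?_, ?_⟩
      · intro S hS
        rcases Finset.mem_insert.mp hS with rfl | hS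
        · exact ⟨by rw [hAcard]; exact min_le_left _ _, hAT⟩
        · exact ⟨(hI'1 S hS).1, (hI'1 S hS).2.trans Finset.sdiff_subset⟩
      · intro v hv
        by_cases hvA : v ∈ A
        · exact ⟨A, Finset.mem_insert_self _ _, hvA⟩
        · obtain ⟨S, hS, hvS⟩ := hI'2 v (Finset.mem_sdiff.mpr ⟨hv, hvA⟩)
          exact ⟨S, Finset.mem_insert_of_mem hS, hvS⟩
      · have hcard : (T \ A).card = T.card - A.card := Finset.card_sdiff_of_subset hAT
        have h1 : (insert A I').card ≤ I'.card + 1 := Finset.card_insert_le _ _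
        have h2 : I'.card ≤ (T.card - min k T.card + k - 1) / k := by
          rw [← hAcard, ← hcard]; exact hI'3
        rcases le_or_gt T.card k with hle | hlt
        · rw [min_eq_right hle] at h2
          have h3 : (T.card - T.card + k - 1) / k = 0 := Nat.div_eq_of_lt (by omega)
          have h4 : 1 ≤ (T.card + k - 1) / k := by
            rw [Nat.le_div_iff_mul_le (by omega)]; omega
          omega
        · rw [min_eq_left hlt.le] at h2
          have he1 : T.card - k + k - 1 = T.card - 1 := by omega
          rw [he1] at h2
          have he2 : (T.card + k - 1) / k = (T.card - 1) / k + 1 := by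
            have h : T.card + k - 1 = (T.card - 1) + k := by omega
            rw [h, Nat.add_div_right _ (by omega)]
          omega

/-- The endpoints of a covered edge have in-degrees differing by exactly one. -/
lemma covered_ncard {V : Type*} [Fintype V] {E : V → V → Prop} {u v : V}
    (h : CoveredEdge E u v) : (parents E v).ncard = (parents E u).ncard + 1 := by
  have hu : u ∈ parents E v := h.1
  rw [h.2]
  exact (Set.ncard_diff_singleton_add_one hu (Set.toFinite _)).symm

/-- Bounded-size verifying sets versus the atomic verification number
`ℓ = mvc (C(G))`: (i) every family of vertex subsets each of size at most `k` that
separates every covered edge of the DAG `G` has at least `⌈ℓ / k⌉` members, and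
(ii) some such family has at most `⌈ℓ / k⌉ + 1` members. -/
theorem bounded_size_verifying_set_bounds
    {V : Type*} [Fintype V] [DecidableEq V]
    (E : V → V → Prop) (hE : IsDAG E) (k : ℕ) (hk : 1 ≤ k) :
    (∀ I : Finset (Finset V),
      (∀ S ∈ I, S.card ≤ k) →
      (∀ u v : V, CoveredEdge E u v →
        ∃ S ∈ I, (u ∈ S ∧ v ∉ S) ∨ (u ∉ S ∧ v ∈ S)) →
      (mvc (coveredEdges E) + k - 1) / k ≤ I.card) ∧
    (∃ I : Finset (Finset V),
      (∀ S ∈ I, S.card ≤ k) ∧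
      (∀ u v : V, CoveredEdge E u v →
        ∃ S ∈ I, (u ∈ S ∧ v ∉ S) ∨ (u ∉ S ∧ v ∈ S)) ∧
      I.card ≤ (mvc (coveredEdges E) + k - 1) / k + 1) := by
  classical
  constructor
  · -- lower bound
    intro I hsize hsep
    set U : Finset V := I.biUnion id with hU
    have hcov : mvc (coveredEdges E) ≤ U.card := by
      apply Nat.sInf_le
      refine ⟨U, ?_, rfl⟩
      intro p hp
      obtain ⟨S, hSI, hor⟩ := hsep p.1 p.2 hp
      rcases hor with ⟨h1, _⟩ | ⟨_, h2⟩
      · exact Or.inl (Finset.mem_biUnion.mpr ⟨S, hSI, h1⟩)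
      · exact Or.inr (Finset.mem_biUnion.mpr ⟨S, hSI, h2⟩)
    have hUk : U.card ≤ I.card * k := by
      calc U.card ≤ ∑ S ∈ I, (id S).card := Finset.card_biUnion_le
        _ ≤ I.card * k := Finset.sum_le_card_nsmul _ _ _ (fun S hS => hsize S hS)
    have hmvc : mvc (coveredEdges E) ≤ k * I.card := by
      calc mvc (coveredEdges E) ≤ U.card := hcov
        _ ≤ I.card * k := hUk
        _ = k * I.card := mul_comm _ _
    calc (mvc (coveredEdges E) + k - 1) / k ≤ (k * I.card + (k - 1)) / k := by
          apply Nat.div_le_div_right; omega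
      _ = I.card + (k - 1) / k := Nat.mul_add_div (by omega) _ _
      _ = I.card := by rw [Nat.div_eq_of_lt (by omega), add_zero]
  · -- upper bound
    have hmem : mvc (coveredEdges E) ∈
        {n | ∃ S : Finset V, (∀ p ∈ coveredEdges E, p.1 ∈ S ∨ p.2 ∈ S) ∧ S.card = n} := by
      apply Nat.sInf_mem
      exact ⟨Finset.univ.card, Finset.univ, fun p _ => Or.inl (Finset.mem_univ _), rfl⟩
    obtain ⟨S, hScov, hScard⟩ := hmem
    set S1 : Finset V := S.filter (fun v => (parents E v).ncard % 2 = 0) with hS1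
    set S2 : Finset V := S.filter (fun v => ¬ (parents E v).ncard % 2 = 0) with hS2
    obtain ⟨I1, hI11, hI12, hI13⟩ := chunk_lemma k hk S1
    obtain ⟨I2, hI21, hI22, hI23⟩ := chunk_lemma k hk S2
    refine ⟨I1 ∪ I2, ?_, ?_, ?_⟩
    · intro T hT
      rcases Finset.mem_union.mp hT with h | h
      · exact (hI11 T h).1
      · exact (hI21 T h).1
    · intro u v huv
      have hpar : (parents E v).ncard = (parents E u).ncard + 1 := covered_ncard huv
      have hne : (parents E u).ncard % 2 ≠ (parents E v).ncard % 2 := by omega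
      rcases hScov (u, v) huv with hu | hv
      · by_cases hp : (parents E u).ncard % 2 = 0
        · obtain ⟨T, hT, huT⟩ := hI12 u (Finset.mem_filter.mpr ⟨hu, hp⟩)
          refine ⟨T, Finset.mem_union_left _ hT, Or.inl ⟨huT, fun hvT => ?_⟩⟩
          have := Finset.mem_filter.mp ((hI11 T hT).2 hvT)
          omega
        · obtain ⟨T, hT, huT⟩ := hI22 u (Finset.mem_filter.mpr ⟨hu, hp⟩)
          refine ⟨T, Finset.mem_union_right _ hT, Or.inl ⟨huT, fun hvT => ?_⟩⟩
          have := Finset.mem_filter.mp ((hI21 T hT).2 hvT)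
          omega
      · by_cases hp : (parents E v).ncard % 2 = 0
        · obtain ⟨T, hT, hvT⟩ := hI12 v (Finset.mem_filter.mpr ⟨hv, hp⟩)
          refine ⟨T, Finset.mem_union_left _ hT, Or.inr ⟨fun huT => ?_, hvT⟩⟩
          have := Finset.mem_filter.mp ((hI11 T hT).2 huT)
          omega
        · obtain ⟨T, hT, hvT⟩ := hI22 v (Finset.mem_filter.mpr ⟨hv, hp⟩)
          refine ⟨T, Finset.mem_union_right _ hT, Or.inr ⟨fun huT => ?_, hvT⟩⟩
          have := Finset.mem_filter.mp ((hI21 T hT).2 huT)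
          omega
    · have hsum : S1.card + S2.card = S.card := Finset.card_filter_add_card_filter_not _
      have key : (S1.card + k - 1) / k + (S2.card + k - 1) / k ≤
          (S.card + k - 1) / k + 1 := by
        have h1 : (S1.card + k - 1) / k + (S2.card + k - 1) / k ≤
            ((S1.card + k - 1) + (S2.card + k - 1)) / k := Nat.add_div_le_add_div _ _ _
        have h2 : ((S1.card + k - 1) + (S2.card + k - 1)) / k ≤
            ((S.card + k - 1) + k) / k := by
          apply Nat.div_le_div_right; omega
        have h3 : ((S.card + k - 1) + k) / k = (S.card + k - 1) / k + 1 :=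
          Nat.add_div_right _ (by omega)
        omega
      calc (I1 ∪ I2).card ≤ I1.card + I2.card := Finset.card_union_le _ _
        _ ≤ (S1.card + k - 1) / k + (S2.card + k - 1) / k := add_le_add hI13 hI23
        _ ≤ (S.card + k - 1) / k + 1 := key
        _ = (mvc (coveredEdges E) + k - 1) / k + 1 := by rw [hScard]
end
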